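/- Let C be an infinitary pretopos and X an object. For A ∈ C/(X × X), let G_X(A) = ∐_{n≥0} (A ⊔ A^op)^{⊗_X n} be the free ⊗_X-monoid on A ⊔ A^op. Then the pair (X, G_X(A)) with the induced structure maps is an internal groupoid-like object satisfying the Kan conditions (composition, inverse), and the coequalizer of the two maps G_X(A) ⇉ X equals the coequalizer of the two maps A ⇉ X. -/

import Mathlib

open CategoryTheory CategoryTheory.Limits

universe v u

variable {C : Type u} [Category.{v} C] [HasFiniteLimits C]

namespace RelTensor

variable (X : C)

/-- The source map of an object of `C/(X × X)`. -/
noncomputable abbrev src (A : Over (X ⨯ X)) : A.left ⟶ X := A.hom ≫ prod.fst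

/-- The target map of an object of `C/(X × X)`. -/
noncomputable abbrev tgt (A : Over (X ⨯ X)) : A.left ⟶ X := A.hom ≫ prod.snd

/-- The composition tensor product `A ⊗_X B = A ×_{d₁, X, d₀} B` on `C/(X × X)`. -/
noncomputable def tens (A B : Over (X ⨯ X)) : Over (X ⨯ X) :=
  Over.mk (prod.lift (pullback.fst (tgt X A) (src X B) ≫ src X A)
    (pullback.snd (tgt X A) (src X B) ≫ tgt X B))

/-- The unit for `⊗_X`: the diagonal `X ⟶ X × X`. -/
noncomputable def unitX : Over (X ⨯ X) := Over.mk (diag X)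

/-- The opposite relation, obtained by swapping the two structure maps. -/
noncomputable def opX : Over (X ⨯ X) ⥤ Over (X ⨯ X) :=
  Over.map (prod.braiding X X).hom

end RelTensor

variable (C)

/-- An equivalence groupoid in `C`: a pair of objects with a monomorphism
`X₁ ⟶ X₀ ⨯ X₀` which is an internal equivalence relation. -/
structure EqGpd where
  X₀ : C
  X₁ : C
  d₀ : X₁ ⟶ X₀
  d₁ : X₁ ⟶ X₀
  mono : Mono (prod.lift d₀ d₁)
  refl : ∀ (T : C) (x : T ⟶ X₀), ∃ h : T ⟶ X₁, h ≫ d₀ = x ∧ h ≫ d₁ = x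
  symm : ∀ (T : C) (x y : T ⟶ X₀), (∃ h : T ⟶ X₁, h ≫ d₀ = x ∧ h ≫ d₁ = y) →
    ∃ h : T ⟶ X₁, h ≫ d₀ = y ∧ h ≫ d₁ = x
  trans : ∀ (T : C) (x y z : T ⟶ X₀),
    (∃ h : T ⟶ X₁, h ≫ d₀ = x ∧ h ≫ d₁ = y) →
    (∃ h : T ⟶ X₁, h ≫ d₀ = y ∧ h ≫ d₁ = z) →
    ∃ h : T ⟶ X₁, h ≫ d₀ = x ∧ h ≫ d₁ = z

namespace EqGpd

variable {C}

/-- A morphism of equivalence groupoids. -/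
@[ext]
structure Hom (A B : EqGpd C) where
  f₀ : A.X₀ ⟶ B.X₀
  f₁ : A.X₁ ⟶ B.X₁
  w₀ : f₁ ≫ B.d₀ = A.d₀ ≫ f₀
  w₁ : f₁ ≫ B.d₁ = A.d₁ ≫ f₀

instance : Category (EqGpd C) where
  Hom A B := Hom A B
  id A := ⟨𝟙 _, 𝟙 _, by simp, by simp⟩
  comp {A B D} f g := ⟨f.f₀ ≫ g.f₀, f.f₁ ≫ g.f₁,
    by rw [Category.assoc, g.w₀, ← Category.assoc, f.w₀, Category.assoc],
    by rw [Category.assoc, g.w₁, ← Category.assoc, f.w₁, Category.assoc]⟩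
  id_comp f := by apply Hom.ext <;> simp
  comp_id f := by apply Hom.ext <;> simp
  assoc f g h := by apply Hom.ext <;> simp

@[simp] lemma comp_f₀ {A B D : EqGpd C} (f : A ⟶ B) (g : B ⟶ D) :
    (f ≫ g).f₀ = f.f₀ ≫ g.f₀ := rfl

@[simp] lemma comp_f₁ {A B D : EqGpd C} (f : A ⟶ B) (g : B ⟶ D) :
    (f ≫ g).f₁ = f.f₁ ≫ g.f₁ := rfl

@[simp] lemma id_f₀ (A : EqGpd C) : (𝟙 A : A ⟶ A).f₀ = 𝟙 A.X₀ := rfl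

@[simp] lemma id_f₁ (A : EqGpd C) : (𝟙 A : A ⟶ A).f₁ = 𝟙 A.X₁ := rfl

/-- The homotopy relation on morphisms of equivalence groupoids. -/
def htpy : HomRel (EqGpd C) := fun {A B} f g =>
  ∃ h : A.X₀ ⟶ B.X₁, h ≫ B.d₀ = f.f₀ ∧ h ≫ B.d₁ = g.f₀

/-- The embedding of `C` into equivalence groupoids via diagonals. -/
def disc : C ⥤ EqGpd C where
  obj X :=
    { X₀ := X
      X₁ := X
      d₀ := 𝟙 X
      d₁ := 𝟙 X
      mono := ⟨fun {Z} g h w => by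
        have := congrArg (fun t => t ≫ (prod.fst : X ⨯ X ⟶ X)) w
        simp only [Category.assoc] at this
        erw [prod.lift_fst] at this
        simpa using this⟩
      refl := fun T x => ⟨x, by simp, by simp⟩
      symm := fun T x y ⟨h, h0, h1⟩ => ⟨h, by simpa using h1, by simpa using h0⟩
      trans := fun T x y z ⟨h, h0, h1⟩ ⟨k, k0, k1⟩ =>
        ⟨h, h0, by
          simp only [Category.comp_id] at h0 h1 k0 k1 ⊢
          rw [h1, ← k0]; exact k1⟩ }
  map {X Y} u := ⟨u, u, by simp, by simp⟩
  map_id X := by apply Hom.ext <;> simp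
  map_comp f g := by apply Hom.ext <;> simp

end EqGpd

variable {C}

/-- `f` is an effective epimorphism: it is the coequalizer of its kernel pair. -/
def IsEffectiveEpi {X Y : C} (f : X ⟶ Y) : Prop :=
  ∃ w : pullback.fst f f ≫ f = pullback.snd f f ≫ f,
    Nonempty (IsColimit (Cofork.ofπ f w))

namespace RelTensor

variable (X : C) [HasBinaryCoproducts C] [∀ J : Type v, HasColimitsOfShape (Discrete J) C]

/-- `A ⊔ A^op` in `C/(X × X)`. -/
noncomputable def zig (A : Over (X ⨯ X)) : Over (X ⨯ X) :=
  Over.mk (coprod.desc A.hom ((opX X).obj A).hom)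

/-- Iterated tensor power for `⊗_X`. -/
noncomputable def pow (A : Over (X ⨯ X)) : ℕ → Over (X ⨯ X)
  | 0 => unitX X
  | n + 1 => tens X A (pow A n)

/-- The free `⊗_X`-monoid `G_X(A) = ∐ₙ (A ⊔ A^op)^{⊗_X n}` on `A ⊔ A^op`. -/
noncomputable def GXobj (A : Over (X ⨯ X)) : Over (X ⨯ X) :=
  Over.mk (Sigma.desc fun n : ULift.{v} ℕ => (pow X (zig X A) n.down).hom)

end RelTensor

open RelTensor

/-- The December 2024 Mathlib notion `CategoryTheory.Limits.CoproductDisjoint` (binary),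
restated verbatim since Mathlib has replaced it by a different notion. -/
class OldCoproductDisjoint {C : Type u} [Category.{v} C] (X₁ X₂ : C) where
  isInitialOfIsPullbackOfIsCoproduct :
    ∀ {X Z} {pX₁ : X₁ ⟶ X} {pX₂ : X₂ ⟶ X} {f : Z ⟶ X₁} {g : Z ⟶ X₂}
      (_ : IsColimit (BinaryCofan.mk pX₁ pX₂)) (comm : f ≫ pX₁ = g ≫ pX₂),
      IsLimit (PullbackCone.mk _ _ comm) → IsInitial Z
  isInitialOfIsPullbackOfCoproduct :
    ∀ {Z} {f : Z ⟶ X₁} {g : Z ⟶ X₂} [HasBinaryCoproduct X₁ X₂]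
      (comm : f ≫ coprod.inl = g ≫ coprod.inr),
      IsLimit (PullbackCone.mk _ _ comm) → IsInitial Z :=
    fun comm => isInitialOfIsPullbackOfIsCoproduct (coprodIsCoprod _ _) comm
  mono_inl : ∀ (X) (X₁ : X₁ ⟶ X) (X₂ : X₂ ⟶ X) (_ : IsColimit (BinaryCofan.mk X₁ X₂)), Mono X₁
  mono_inr : ∀ (X) (X₁ : X₁ ⟶ X) (X₂ : X₂ ⟶ X) (_ : IsColimit (BinaryCofan.mk X₁ X₂)), Mono X₂

/-- The December 2024 Mathlib notion `CategoryTheory.Limits.CoproductsDisjoint`. -/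
class CoproductsDisjoint (C : Type u) [Category.{v} C] where
  CoproductDisjoint : ∀ X Y : C, OldCoproductDisjoint X Y

/-!
`G_X(A)` is the free category on the graph `A ⊔ A^op` over `X`: its summand of index `n` is
the object of composable words of length `n`. The empty words give the identities, and
reversing a word while swapping each letter between `A` and `A^op` gives inverses.
Composition is concatenation of words; to define it on all of `G_X(A) ⊗_X G_X(A)` one needs
`⊗_X` to distribute over the coproduct, which is exactly universality of coproducts.
A map `q` out of `X` coequalizes `G_X(A)` iff it coequalizes `A`: every word is a chain of
`A`-steps taken forwards or backwards, and `A` sits inside `G_X(A)` as the words of length one.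
-/

namespace RelTensor

variable {X : C}

@[simp] lemma hom_left_src {A B : Over (X ⨯ X)} (f : A ⟶ B) : f.left ≫ src X B = src X A := by
  rw [src, src, ← Over.w f, Category.assoc]

@[simp] lemma hom_left_tgt {A B : Over (X ⨯ X)} (f : A ⟶ B) : f.left ≫ tgt X B = tgt X A := by
  rw [tgt, tgt, ← Over.w f, Category.assoc]

lemma hom_left_src_assoc {A B : Over (X ⨯ X)} (f : A ⟶ B) {T : C} (h : X ⟶ T) :
    f.left ≫ src X B ≫ h = src X A ≫ h := by
  rw [← Category.assoc, hom_left_src]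

lemma hom_left_tgt_assoc {A B : Over (X ⨯ X)} (f : A ⟶ B) {T : C} (h : X ⟶ T) :
    f.left ≫ tgt X B ≫ h = tgt X A ≫ h := by
  rw [← Category.assoc, hom_left_tgt]

noncomputable def homMk {A B : Over (X ⨯ X)} (f : A.left ⟶ B.left)
    (h₁ : f ≫ src X B = src X A) (h₂ : f ≫ tgt X B = tgt X A) : A ⟶ B :=
  Over.homMk f (prod.hom_ext (by simpa using h₁) (by simpa using h₂))

lemma src_unitX_eq_tgt : src X (unitX X) = tgt X (unitX X) := by
  simp only [src, tgt, unitX, Over.mk_hom, prod.lift_fst, prod.lift_snd]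

-- `x` itself, typed as a map into `(unitX X).left`: `unitX` is not reducible, so lemmas about
-- `src X (unitX X)` only match composites whose middle object is literally `(unitX X).left`.
noncomputable def unitLift {W : C} (x : W ⟶ X) : W ⟶ (unitX X).left := x

@[simp] lemma unitLift_src {W : C} (x : W ⟶ X) : unitLift x ≫ src X (unitX X) = x :=
  (congrArg (x ≫ ·) (prod.lift_fst _ _)).trans (Category.comp_id x)

@[simp] lemma unitLift_tgt {W : C} (x : W ⟶ X) : unitLift x ≫ tgt X (unitX X) = x :=
  (congrArg (x ≫ ·) (prod.lift_snd _ _)).trans (Category.comp_id x)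

-- The object `(opX X).obj A`, rebuilt so that its underlying object is reducibly `A.left`.
noncomputable abbrev rev (A : Over (X ⨯ X)) : Over (X ⨯ X) :=
  Over.mk (prod.lift (tgt X A) (src X A))

@[simp] lemma src_rev (A : Over (X ⨯ X)) : src X (rev A) = tgt X A := prod.lift_fst _ _

@[simp] lemma tgt_rev (A : Over (X ⨯ X)) : tgt X (rev A) = src X A := prod.lift_snd _ _

@[simp] lemma hom_left_tgt_of_rev {A B : Over (X ⨯ X)} (f : A ⟶ rev B) :
    f.left ≫ tgt X B = src X A := by
  simpa using hom_left_src f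

@[simp] lemma hom_left_src_of_rev {A B : Over (X ⨯ X)} (f : A ⟶ rev B) :
    f.left ≫ src X B = tgt X A := by
  simpa using hom_left_tgt f

section Tens

variable {A B : Over (X ⨯ X)}

-- The projections of `A ⊗_X B`, typed against `(tens X A B).left` for the same reason.
noncomputable def tensFst : (tens X A B).left ⟶ A.left := pullback.fst (tgt X A) (src X B)

noncomputable def tensSnd : (tens X A B).left ⟶ B.left := pullback.snd (tgt X A) (src X B)

lemma tensFst_tgt : tensFst ≫ tgt X A = tensSnd ≫ src X B := pullback.condition

lemma tensFst_tgt_assoc {T : C} (h : X ⟶ T) :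
    tensFst ≫ tgt X A ≫ h = tensSnd ≫ src X B ≫ h := by
  simpa using congrArg (· ≫ h) (tensFst_tgt (A := A) (B := B))

@[simp] lemma src_tens : src X (tens X A B) = tensFst ≫ src X A := prod.lift_fst _ _

@[simp] lemma tgt_tens : tgt X (tens X A B) = tensSnd ≫ tgt X B := prod.lift_snd _ _

noncomputable def tensLift {W : C} (a : W ⟶ A.left) (b : W ⟶ B.left)
    (h : a ≫ tgt X A = b ≫ src X B) : W ⟶ (tens X A B).left :=
  pullback.lift a b h

@[simp] lemma tensLift_fst {W : C} (a : W ⟶ A.left) (b : W ⟶ B.left)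
    (h : a ≫ tgt X A = b ≫ src X B) : tensLift a b h ≫ tensFst = a := pullback.lift_fst _ _ _

@[simp] lemma tensLift_snd {W : C} (a : W ⟶ A.left) (b : W ⟶ B.left)
    (h : a ≫ tgt X A = b ≫ src X B) : tensLift a b h ≫ tensSnd = b := pullback.lift_snd _ _ _

@[simp] lemma tensLift_fst_assoc {W Y : C} (a : W ⟶ A.left) (b : W ⟶ B.left)
    (h : a ≫ tgt X A = b ≫ src X B) (k : A.left ⟶ Y) :
    tensLift a b h ≫ tensFst ≫ k = a ≫ k :=
  pullback.lift_fst_assoc _ _ _ _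

@[simp] lemma tensLift_snd_assoc {W Y : C} (a : W ⟶ A.left) (b : W ⟶ B.left)
    (h : a ≫ tgt X A = b ≫ src X B) (k : B.left ⟶ Y) :
    tensLift a b h ≫ tensSnd ≫ k = b ≫ k :=
  pullback.lift_snd_assoc _ _ _ _

end Tens

noncomputable def tensMap {A A' B B' : Over (X ⨯ X)} (f : A ⟶ A') (g : B ⟶ B') :
    tens X A B ⟶ tens X A' B' :=
  homMk (tensLift (tensFst ≫ f.left) (tensSnd ≫ g.left) (by simpa using tensFst_tgt))
    (by simp) (by simp)

@[simp] lemma tensMap_fst {A A' B B' : Over (X ⨯ X)} (f : A ⟶ A') (g : B ⟶ B') :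
    (tensMap f g).left ≫ tensFst = tensFst ≫ f.left :=
  tensLift_fst _ _ _

@[simp] lemma tensMap_snd {A A' B B' : Over (X ⨯ X)} (f : A ⟶ A') (g : B ⟶ B') :
    (tensMap f g).left ≫ tensSnd = tensSnd ≫ g.left :=
  tensLift_snd _ _ _

noncomputable def tensAssoc (A B D : Over (X ⨯ X)) :
    tens X (tens X A B) D ⟶ tens X A (tens X B D) :=
  homMk
    (tensLift (tensFst ≫ tensFst) (tensLift (tensFst ≫ tensSnd) tensSnd
        (by simpa using tensFst_tgt (A := tens X A B) (B := D)))
      (by simp [tensFst_tgt]))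
    (by simp) (by simp)

noncomputable def unitTens (B : Over (X ⨯ X)) : tens X (unitX X) B ⟶ B :=
  homMk tensSnd (by rw [src_tens, src_unitX_eq_tgt, tensFst_tgt]) (by simp)

noncomputable def tensUnit (A : Over (X ⨯ X)) : A ⟶ tens X A (unitX X) :=
  homMk (tensLift (𝟙 A.left) (unitLift (tgt X A)) (by simp)) (by simp) (by simp)

noncomputable def unitRev : unitX X ⟶ rev (unitX X) :=
  homMk (𝟙 (unitX X).left) (by simp [src_unitX_eq_tgt]) (by simp [src_unitX_eq_tgt])

noncomputable def tensRev {A A' B B' : Over (X ⨯ X)} (f : A ⟶ rev A') (g : B ⟶ rev B') :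
    tens X A B ⟶ rev (tens X B' A') :=
  homMk (tensLift (tensSnd ≫ g.left) (tensFst ≫ f.left) (by simpa using tensFst_tgt.symm))
    (by simp) (by simp)

noncomputable def revMap {A B : Over (X ⨯ X)} (f : A ⟶ B) : rev A ⟶ rev B :=
  homMk f.left (by simp) (by simp)

section Words

variable (Z : Over (X ⨯ X))

noncomputable def powConcat : ∀ m n : ℕ, tens X (pow X Z m) (pow X Z n) ⟶ pow X Z (n + m)
  | 0, n => unitTens (pow X Z n)
  | m + 1, n => tensAssoc Z (pow X Z m) (pow X Z n) ≫ tensMap (𝟙 Z) (powConcat m n)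

noncomputable def powSnoc (n : ℕ) : tens X (pow X Z n) Z ⟶ pow X Z (n + 1) :=
  tensMap (𝟙 _) (tensUnit Z) ≫ powConcat Z n 1 ≫ eqToHom (by rw [Nat.add_comm])

variable {Z}

noncomputable def powRev (o : Z ⟶ rev Z) : ∀ n : ℕ, pow X Z n ⟶ rev (pow X Z n)
  | 0 => unitRev
  | n + 1 => tensRev o (powRev o n) ≫ revMap (powSnoc Z n)

end Words

section Zig

variable [HasBinaryCoproducts C] (A : Over (X ⨯ X))

lemma inl_src_zig : coprod.inl ≫ src X (zig X A) = src X A := by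
  simp only [zig, src, Over.mk_hom, coprod.inl_desc_assoc]

lemma inl_tgt_zig : coprod.inl ≫ tgt X (zig X A) = tgt X A := by
  simp only [zig, tgt, Over.mk_hom, coprod.inl_desc_assoc]

lemma inr_src_zig : coprod.inr ≫ src X (zig X A) = tgt X A :=
  (coprod.inr_desc_assoc _ _ _).trans (by simp [opX, tgt, prod.lift_fst])

lemma inr_tgt_zig : coprod.inr ≫ tgt X (zig X A) = src X A :=
  (coprod.inr_desc_assoc _ _ _).trans (by simp [opX, src, prod.lift_snd])

noncomputable def zigInl : A ⟶ zig X A :=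
  homMk coprod.inl (inl_src_zig A) (inl_tgt_zig A)

noncomputable def zigInr : rev A ⟶ zig X A :=
  homMk coprod.inr (by rw [src_rev]; exact inr_src_zig A) (by rw [tgt_rev]; exact inr_tgt_zig A)

lemma zig_hom_ext {W : C} {f g : (zig X A).left ⟶ W}
    (hl : (zigInl A).left ≫ f = (zigInl A).left ≫ g)
    (hr : (zigInr A).left ≫ f = (zigInr A).left ≫ g) : f = g :=
  coprod.hom_ext hl hr

noncomputable def zigSwap : zig X A ⟶ rev (zig X A) :=
  homMk (coprod.desc (coprod.inr : _ ⟶ A.left ⨿ ((opX X).obj A).left) coprod.inl)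
    (coprod.hom_ext
      (by
        rw [src_rev]
        exact (coprod.inl_desc_assoc _ _ _).trans ((inr_tgt_zig A).trans (inl_src_zig A).symm))
      (by
        rw [src_rev]
        exact (coprod.inr_desc_assoc _ _ _).trans ((inl_tgt_zig A).trans (inr_src_zig A).symm)))
    (coprod.hom_ext
      (by
        rw [tgt_rev]
        exact (coprod.inl_desc_assoc _ _ _).trans ((inr_src_zig A).trans (inl_tgt_zig A).symm))
      (by
        rw [tgt_rev]
        exact (coprod.inr_desc_assoc _ _ _).trans ((inl_src_zig A).trans (inr_tgt_zig A).symm)))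

end Zig

section Sigma

variable {I J : Type*} (P : I → Over (X ⨯ X)) [HasCoproduct fun i => (P i).left]

noncomputable abbrev sigmaOver : Over (X ⨯ X) := Over.mk (Sigma.desc fun i => (P i).hom)

noncomputable def sigmaOverι (i : I) : P i ⟶ sigmaOver P :=
  Over.homMk (Sigma.ι (fun i => (P i).left) i) (Sigma.ι_desc (fun i => (P i).hom) i)

lemma ι_src_sigmaOver (i : I) : Sigma.ι _ i ≫ src X (sigmaOver P) = src X (P i) := by
  simp [src]

lemma ι_tgt_sigmaOver (i : I) : Sigma.ι _ i ≫ tgt X (sigmaOver P) = tgt X (P i) := by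
  simp [tgt]

noncomputable def sigmaOverDesc {D : Over (X ⨯ X)} (u : ∀ i, P i ⟶ D) : sigmaOver P ⟶ D :=
  Over.homMk (Sigma.desc fun i => (u i).left) (Sigma.hom_ext _ _ fun i => by simp)

variable {P} (Q : J → Over (X ⨯ X)) [HasCoproduct fun j => (Q j).left]

-- Universality makes `⊗_X` distribute over both coproducts: `∐ᵢⱼ Pᵢ ⊗_X Qⱼ ≅ ΣP ⊗_X ΣQ`.
noncomputable def tensSigmaOverDesc
    (hP : IsUniversalColimit (Cofan.mk _ (Sigma.ι fun i => (P i).left)))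
    (hQ : IsUniversalColimit (Cofan.mk _ (Sigma.ι fun j => (Q j).left)))
    {D : Over (X ⨯ X)} (u : ∀ i j, tens X (P i) (Q j) ⟶ D) :
    tens X (sigmaOver P) (sigmaOver Q) ⟶ D :=
  let hd := (hP.nonempty_isColimit_prod_of_pullbackCone hQ (fun i => tgt X (P i))
    (fun j => src X (Q j)) (tgt X (sigmaOver P)) (src X (sigmaOver Q))
    (fun _ _ => pullback.cone _ _) (fun _ _ => pullback.isLimit _ _)
    (pullback.cone _ _) (pullback.isLimit _ _)
    (d := Cofan.mk (tens X (sigmaOver P) (sigmaOver Q)).left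
      fun p => (tensMap (sigmaOverι P p.1) (sigmaOverι Q p.2)).left) (Iso.refl _)
    (ι_tgt_sigmaOver P) (ι_src_sigmaOver Q)
    (fun _ _ => (congrArg _ (Category.id_comp _)).trans (tensMap_fst _ _))
    (fun _ _ => (congrArg _ (Category.id_comp _)).trans (tensMap_snd _ _))).some
  homMk (Cofan.IsColimit.desc hd fun p => (u p.1 p.2).left)
    (Cofan.IsColimit.hom_ext hd _ _ fun p =>
      (Cofan.IsColimit.fac_assoc _ _ _ _).trans
        ((hom_left_src (u p.1 p.2)).trans (hom_left_src _).symm))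
    (Cofan.IsColimit.hom_ext hd _ _ fun p =>
      (Cofan.IsColimit.fac_assoc _ _ _ _).trans
        ((hom_left_tgt (u p.1 p.2)).trans (hom_left_tgt _).symm))

end Sigma

section Coequalizes

variable {T : C} (q : X ⟶ T)

lemma coequalizes_of_hom {A B : Over (X ⨯ X)} (f : A ⟶ B) (hB : src X B ≫ q = tgt X B ≫ q) :
    src X A ≫ q = tgt X A ≫ q := by
  rw [← hom_left_src_assoc f, hB, hom_left_tgt_assoc]

lemma coequalizes_tens {A B : Over (X ⨯ X)} (hA : src X A ≫ q = tgt X A ≫ q)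
    (hB : src X B ≫ q = tgt X B ≫ q) : src X (tens X A B) ≫ q = tgt X (tens X A B) ≫ q := by
  rw [src_tens, tgt_tens, Category.assoc, hA, tensFst_tgt_assoc, hB]
  exact (Category.assoc _ _ _).symm

lemma coequalizes_pow {Z : Over (X ⨯ X)} (hZ : src X Z ≫ q = tgt X Z ≫ q) :
    ∀ n, src X (pow X Z n) ≫ q = tgt X (pow X Z n) ≫ q
  | 0 => by rw [pow, src_unitX_eq_tgt]
  | n + 1 => coequalizes_tens q hZ (coequalizes_pow hZ n)

lemma coequalizes_zig [HasBinaryCoproducts C] {A : Over (X ⨯ X)}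
    (hA : src X A ≫ q = tgt X A ≫ q) : src X (zig X A) ≫ q = tgt X (zig X A) ≫ q :=
  zig_hom_ext A (by rw [hom_left_src_assoc, hom_left_tgt_assoc, hA])
    (by rw [hom_left_src_assoc, hom_left_tgt_assoc, src_rev, tgt_rev, hA])

lemma coequalizes_sigmaOver {I : Type*} {P : I → Over (X ⨯ X)}
    [HasCoproduct fun i => (P i).left] (h : ∀ i, src X (P i) ≫ q = tgt X (P i) ≫ q) :
    src X (sigmaOver P) ≫ q = tgt X (sigmaOver P) ≫ q :=
  Sigma.hom_ext _ _ fun i => by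
    rw [← Category.assoc, ι_src_sigmaOver, h i, ← ι_tgt_sigmaOver P, Category.assoc]

end Coequalizes

section GX

variable [HasBinaryCoproducts C] [∀ J : Type v, HasColimitsOfShape (Discrete J) C]
  (A : Over (X ⨯ X))

-- `GXobj X A` is `sigmaOver (gxPow A)` by definition.
noncomputable abbrev gxPow (n : ULift.{v} ℕ) : Over (X ⨯ X) := pow X (zig X A) n.down

noncomputable def gxUnit : unitX X ⟶ GXobj X A :=
  sigmaOverι (gxPow A) ⟨0⟩

noncomputable def gxComp
    (hG : IsUniversalColimit (Cofan.mk _ (Sigma.ι fun n => (gxPow A n).left))) :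
    tens X (GXobj X A) (GXobj X A) ⟶ GXobj X A :=
  tensSigmaOverDesc _ hG hG fun m n =>
    powConcat _ m.down n.down ≫ sigmaOverι (gxPow A) ⟨n.down + m.down⟩

noncomputable def gxInv : GXobj X A ⟶ rev (GXobj X A) :=
  sigmaOverDesc _ fun n => powRev (zigSwap A) n.down ≫ revMap (sigmaOverι (gxPow A) n)

noncomputable def gxGen : A ⟶ GXobj X A :=
  zigInl A ≫ tensUnit _ ≫ sigmaOverι (gxPow A) ⟨1⟩

lemma coequalizes_GXobj_iff {T : C} (q : X ⟶ T) :
    src X A ≫ q = tgt X A ≫ q ↔ src X (GXobj X A) ≫ q = tgt X (GXobj X A) ≫ q :=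
  ⟨fun h => coequalizes_sigmaOver q fun n => coequalizes_pow q (coequalizes_zig q h) n.down,
    coequalizes_of_hom q (gxGen A)⟩

end GX

end RelTensor

/-- for an infinitary pretopos `C` and `A ∈ C/(X × X)`, the pair
`(X, G_X(A))` is an internal groupoid-like object satisfying the Kan conditions
(unit, composition and inverse), and a morphism `q : X ⟶ T` coequalizes the two maps
`G_X(A) ⇉ X` iff it coequalizes the two maps `A ⇉ X`; hence the two coequalizers
coincide. -/
theorem GX_groupoid_and_coequalizer
    [∀ J : Type v, HasColimitsOfShape (Discrete J) C] [HasBinaryCoproducts C]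
    (hdisj : Nonempty (CoproductsDisjoint C))
    (huniv : ∀ {J : Type v} (F : Discrete J ⥤ C) (c : Cocone F),
      IsColimit c → IsUniversalColimit c)
    (heff : ∀ A : EqGpd C, ∃ (Q : C) (q : A.X₀ ⟶ Q) (w : A.d₀ ≫ q = A.d₁ ≫ q),
      Nonempty (IsColimit (Cofork.ofπ q w)) ∧ IsIso (pullback.lift A.d₀ A.d₁ w))
    (hstab : ∀ {X Y Z : C} (f : X ⟶ Y) (g : Z ⟶ Y),
      IsEffectiveEpi f → IsEffectiveEpi (pullback.snd f g))
    (X : C) (A : Over (X ⨯ X)) :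
    (∃ σ : X ⟶ (GXobj X A).left,
      σ ≫ src X (GXobj X A) = 𝟙 X ∧ σ ≫ tgt X (GXobj X A) = 𝟙 X) ∧
    (∃ m : pullback (tgt X (GXobj X A)) (src X (GXobj X A)) ⟶ (GXobj X A).left,
      m ≫ src X (GXobj X A) =
        pullback.fst (tgt X (GXobj X A)) (src X (GXobj X A)) ≫ src X (GXobj X A) ∧
      m ≫ tgt X (GXobj X A) =
        pullback.snd (tgt X (GXobj X A)) (src X (GXobj X A)) ≫ tgt X (GXobj X A)) ∧
    (∃ s : (GXobj X A).left ⟶ (GXobj X A).left,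
      s ≫ src X (GXobj X A) = tgt X (GXobj X A) ∧
      s ≫ tgt X (GXobj X A) = src X (GXobj X A)) ∧
    (∀ {T : C} (q : X ⟶ T),
      src X A ≫ q = tgt X A ≫ q ↔
        src X (GXobj X A) ≫ q = tgt X (GXobj X A) ≫ q) := by
  have hG := huniv _ _ (coproductIsCoproduct fun n => (gxPow A n).left)
  refine ⟨⟨unitLift (𝟙 X) ≫ (gxUnit A).left, ?_, ?_⟩,
    ⟨(gxComp A hG).left, (hom_left_src _).trans src_tens, (hom_left_tgt _).trans tgt_tens⟩,
    ⟨(gxInv A).left, hom_left_src_of_rev _, hom_left_tgt_of_rev _⟩,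
    fun q => coequalizes_GXobj_iff A q⟩
  · rw [Category.assoc, hom_left_src, unitLift_src]
  · rw [Category.assoc, hom_left_tgt, unitLift_tgt]
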